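/- Let {f_t}_{t∈ℕ} be the online gradient descent iterates and suppose Assumption 1 holds. If lim_{t→∞} η_t = 0 and ∑_{t=1}^∞ η_t = ∞, then (i) liminf_{t→∞} (𝔼[E(f_t)] − E(f_H)) = 0, and (ii) lim_{T→∞} (∑_{t=1}^T η_t)^{-1} · ∑_{t=1}^T η_t (𝔼[E(f_t)] − E(f_H)) = 0. -/

import Mathlib

/-!
Convexity and the Hölder continuity of `φ'` make the loss self-bounding,
`φ'(y, s) ^ 2 ≤ c (1 + φ(y, s))`. Expanding the square in one step of online gradient descent,
the tangent-line inequality and self-bounding give, after integrating out `z_t` (independent of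
`f_t`), `a_{t+1} ≤ a_t - 2 η_t r_t + η_t ^ 2 (A + B r_t)` for `a_t = 𝔼‖f_t - f_H‖ ^ 2` and
`r_t = 𝔼[E(f_t)] - E(f_H) ≥ 0`. Once `η_t` is small, summing this telescopes to
`∑_{t ≤ T} η_t r_t ≤ C_ε + ε ∑_{t ≤ T} η_t` for every `ε > 0`, so the weighted averages of
`r_t` tend to `0` because `∑ η_t = ∞`; the same divergence forces `liminf r_t = 0`.
-/

open MeasureTheory ProbabilityTheory Filter Real Topology
open scoped RealInnerProductSpace

section SelfBounding

variable {g g' : ℝ → ℝ} {L α : ℝ}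

theorem ConvexOn.add_deriv_mul_sub_le (hconv : ConvexOn ℝ Set.univ g)
    (hderiv : ∀ s, HasDerivAt g (g' s) s) (s t : ℝ) : g s + g' s * (t - s) ≤ g t := by
  rcases lt_trichotomy s t with hst | rfl | hts
  · have := hconv.le_slope_of_hasDerivAt (Set.mem_univ s) (Set.mem_univ t) hst (hderiv s)
    rw [slope_def_field, le_div_iff₀ (sub_pos.2 hst)] at this
    linarith
  · simp
  · have := hconv.slope_le_of_hasDerivAt (Set.mem_univ t) (Set.mem_univ s) hts (hderiv s)
    rw [slope_def_field, div_le_iff₀ (sub_pos.2 hts)] at this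
    linarith

theorem mul_sub_rpow_le_of_holder (hnn : ∀ s, 0 ≤ g s)
    (htan : ∀ s t, g s + g' s * (t - s) ≤ g t)
    (hholder : ∀ s t, |g' s - g' t| ≤ L * |s - t| ^ α) {h : ℝ} (hh : 0 ≤ h) (s : ℝ) :
    h * (|g' s| - L * h ^ α) ≤ g s := by
  rcases le_or_gt 0 (g' s) with hpos | hneg
  · have hdiff := hholder s (s - h)
    rw [sub_sub_cancel, abs_of_nonneg hh] at hdiff
    have htan' := htan (s - h) s
    rw [sub_sub_cancel] at htan'
    rw [abs_of_nonneg hpos]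
    nlinarith [hnn (s - h), (abs_le.1 hdiff).2]
  · have hdiff := hholder s (s + h)
    rw [sub_add_cancel_left, abs_neg, abs_of_nonneg hh] at hdiff
    have htan' := htan (s + h) s
    rw [sub_add_cancel_left] at htan'
    rw [abs_of_neg hneg]
    nlinarith [hnn (s + h), (abs_le.1 hdiff).1]

theorem sq_deriv_le_of_holder (hL : 0 < L) (hα0 : 0 ≤ α) (hα1 : α ≤ 1) (hnn : ∀ s, 0 ≤ g s)
    (htan : ∀ s t, g s + g' s * (t - s) ≤ g t)
    (hholder : ∀ s t, |g' s - g' t| ≤ L * |s - t| ^ α) (s : ℝ) :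
    g' s ^ 2 ≤ 4 * (L ^ (1 + α)⁻¹) ^ 2 * (1 + g s) := by
  set l := L ^ (1 + α)⁻¹
  have hl : 0 < l := rpow_pos_of_pos hL _
  have hlL : l * l ^ α = L := by
    rw [← rpow_one_add' hl.le (by linarith), ← rpow_mul hL.le,
      inv_mul_cancel₀ (by linarith), rpow_one]
  rcases le_or_gt |g' s| (2 * l) with hsmall | hlarge
  · have hsq : g' s ^ 2 ≤ (2 * l) ^ 2 := by
      rw [← sq_abs]; exact pow_le_pow_left₀ (abs_nonneg _) hsmall 2
    nlinarith [hnn s]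
  -- the step `h = x / l ^ 2`, `x = |g' s| / 2`, has `L h ^ α ≤ x` because `l ≤ x`,
  -- so `g s ≥ h (|g' s| - x) = |g' s| ^ 2 / (4 l ^ 2)`
  set x := |g' s| / 2
  have hx : 1 ≤ x / l := (one_le_div hl).2 (by simp only [x]; linarith)
  have hLh : L * (x / l ^ 2) ^ α ≤ x := by
    calc L * (x / l ^ 2) ^ α = l * (x / l) ^ α := by
          rw [← hlL, sq, ← div_div, div_rpow (by positivity) hl.le]
          field_simp
      _ ≤ l * (x / l) := by
          gcongr; simpa using rpow_le_rpow_of_exponent_le hx hα1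
      _ = x := by field_simp
  have hstep := mul_sub_rpow_le_of_holder hnn htan hholder (h := x / l ^ 2) (by positivity) s
  have hsq : g' s ^ 2 = 4 * l ^ 2 * (x / l ^ 2 * (|g' s| - x)) := by
    rw [← sq_abs]; field_simp; ring
  have hle : x / l ^ 2 * (|g' s| - x) ≤ g s := le_trans (by gcongr) hstep
  rw [hsq]
  nlinarith [hnn s]

theorem le_of_sq_deriv_le {c : ℝ} (hc : 0 < c) (htan : ∀ s t, g s + g' s * (t - s) ≤ g t)
    (hself : ∀ s, g' s ^ 2 ≤ c * (1 + g s)) (s : ℝ) : g s ≤ 2 * g 0 + 1 + c * s ^ 2 := by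
  have h0 := htan s 0
  have hs := hself s
  have : c * g s ≤ c * (2 * g 0 + 1 + c * s ^ 2) := by nlinarith [sq_nonneg (g' s - c * s)]
  exact le_of_mul_le_mul_left this hc

end SelfBounding

section Recursion

open Finset

theorem sum_Icc_one_add_sum_Ioc (f : ℕ → ℝ) {N T : ℕ} (h : N ≤ T) :
    ∑ t ∈ Icc 1 N, f t + ∑ t ∈ Ioc N T, f t = ∑ t ∈ Icc 1 T, f t := by
  have hIcc : ∀ n, Icc 1 n = Ioc 0 n := fun n => Icc_add_one_left_eq_Ioc 0 n
  rw [hIcc, hIcc, sum_Ioc_consecutive f (Nat.zero_le N) h]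

theorem tendsto_inv_mul_of_forall_le {u v : ℕ → ℝ} (hv : Tendsto v atTop atTop)
    (hu : ∀ᶠ T in atTop, 0 ≤ u T) (h : ∀ ε > 0, ∃ C, ∀ᶠ T in atTop, u T ≤ C + ε * v T) :
    Tendsto (fun T => (v T)⁻¹ * u T) atTop (𝓝 0) := by
  refine tendsto_order.2 ⟨fun b hb => ?_, fun b hb => ?_⟩
  · filter_upwards [hu, hv.eventually_gt_atTop 0] with T huT hvT
    exact hb.trans_le (mul_nonneg (inv_nonneg.2 hvT.le) huT)
  · obtain ⟨C, hC⟩ := h (b / 2) (half_pos hb)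
    have hCv : Tendsto (fun T => C / v T) atTop (𝓝 0) := tendsto_const_nhds.div_atTop hv
    filter_upwards [hC, hv.eventually_gt_atTop 0, hCv.eventually (gt_mem_nhds (half_pos hb))]
      with T hCT hvT hsmall
    calc (v T)⁻¹ * u T ≤ (v T)⁻¹ * (C + b / 2 * v T) := by gcongr
      _ = C / v T + b / 2 := by field_simp
      _ < b := by linarith

variable {η r a : ℕ → ℝ}

theorem liminf_eq_zero_of_tendsto_weighted_avg (hη : ∀ t, 0 ≤ η t)
    (hS : Tendsto (fun T => ∑ t ∈ Icc 1 T, η t) atTop atTop) (hr : ∀ᶠ t in atTop, 0 ≤ r t)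
    (havg : Tendsto (fun T => (∑ t ∈ Icc 1 T, η t)⁻¹ * ∑ t ∈ Icc 1 T, η t * r t)
      atTop (𝓝 0)) :
    liminf r atTop = 0 := by
  have hfreq : ∀ c > 0, ∃ᶠ t in atTop, r t ≤ c := by
    intro c hc
    by_contra! hgt
    obtain ⟨N, hN⟩ := eventually_atTop.1 hgt
    set S := fun T => ∑ t ∈ Icc 1 T, η t
    set K := ∑ t ∈ Icc 1 N, η t * r t - c * S N
    have hlow : ∀ᶠ T in atTop, c + K / S T ≤ (S T)⁻¹ * ∑ t ∈ Icc 1 T, η t * r t := by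
      filter_upwards [eventually_ge_atTop N, hS.eventually_gt_atTop 0] with T hT hST
      have htail : c * ∑ t ∈ Ioc N T, η t ≤ ∑ t ∈ Ioc N T, η t * r t := by
        rw [mul_sum]
        refine sum_le_sum fun t ht => ?_
        nlinarith [hη t, hN t (mem_Ioc.1 ht).1.le]
      rw [le_inv_mul_iff₀ hST, ← sum_Icc_one_add_sum_Ioc _ hT]
      have hST' : S T = S N + ∑ t ∈ Ioc N T, η t := (sum_Icc_one_add_sum_Ioc η hT).symm
      field_simp
      rw [hST']
      linarith
    have hlim : Tendsto (fun T => c + K / S T) atTop (𝓝 c) := by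
      simpa using tendsto_const_nhds.add (tendsto_const_nhds.div_atTop hS)
    obtain ⟨T, hlowT, hcT, havgT⟩ := (hlow.and
      ((hlim.eventually (lt_mem_nhds (half_lt_self hc))).and
        (havg.eventually (gt_mem_nhds (half_pos hc))))).exists
    linarith
  have hbdd : IsBoundedUnder (· ≥ ·) atTop r := isBoundedUnder_of_eventually_ge hr
  refine le_antisymm (le_of_forall_pos_le_add fun c hc => ?_) ?_
  · simpa using liminf_le_of_frequently_le (hfreq c hc) hbdd
  · exact le_liminf_of_le (IsCoboundedUnder.of_frequently_le (hfreq 1 one_pos)) hr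

theorem liminf_eq_zero_and_tendsto_of_recursion {A B : ℝ} (hη : ∀ t, 0 ≤ η t)
    (hη0 : Tendsto η atTop (𝓝 0)) (hS : Tendsto (fun T => ∑ t ∈ Icc 1 T, η t) atTop atTop)
    (ha : ∀ t, 0 ≤ a t) (hr : ∀ t ≥ 1, 0 ≤ r t)
    (hrec : ∀ t ≥ 1, a (t + 1) ≤ a t - 2 * η t * r t + η t ^ 2 * (A + B * r t)) :
    liminf r atTop = 0 ∧
      Tendsto (fun T => (∑ t ∈ Icc 1 T, η t)⁻¹ * ∑ t ∈ Icc 1 T, η t * r t) atTop (𝓝 0) := by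
  have hsum : ∀ ε > 0, ∃ C, ∀ᶠ T in atTop,
      ∑ t ∈ Icc 1 T, η t * r t ≤ C + ε * ∑ t ∈ Icc 1 T, η t := by
    intro ε hε
    have hη0' (C : ℝ) : Tendsto (fun t => C * η t) atTop (𝓝 0) := by
      simpa using hη0.const_mul C
    have hBη : ∀ᶠ t in atTop, B * η t ≤ 1 := (hη0' B).eventually (ge_mem_nhds one_pos)
    have hAη : ∀ᶠ t in atTop, A * η t ≤ ε := (hη0' A).eventually (ge_mem_nhds hε)
    obtain ⟨N, hN⟩ := eventually_atTop.1 ((hBη.and hAη).and (eventually_ge_atTop 1))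
    have hstep : ∀ t ≥ N, η t * r t ≤ a t - a (t + 1) + ε * η t := by
      intro t ht
      obtain ⟨⟨hBt, hAt⟩, ht1⟩ := hN t ht
      nlinarith [mul_nonneg (hη t) (hr t ht1), hη t, hrec t ht1]
    have htel : ∀ T ≥ N, ∑ t ∈ Ioc N T, η t * r t
        ≤ a (N + 1) - a (T + 1) + ε * ∑ t ∈ Ioc N T, η t := by
      intro T hT
      induction T, hT using Nat.le_induction with
      | base => simp
      | succ T hT ih =>
        rw [sum_Ioc_succ_top (by omega), sum_Ioc_succ_top (by omega)]
        linarith [hstep (T + 1) (by omega)]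
    refine ⟨∑ t ∈ Icc 1 N, η t * r t + a (N + 1), ?_⟩
    filter_upwards [eventually_ge_atTop N] with T hT
    rw [← sum_Icc_one_add_sum_Ioc _ hT, ← sum_Icc_one_add_sum_Ioc η hT]
    nlinarith [htel T hT, ha (T + 1), sum_nonneg fun t (_ : t ∈ Icc 1 N) => hη t]
  have hnn : ∀ T, 0 ≤ ∑ t ∈ Icc 1 T, η t * r t :=
    fun T => sum_nonneg fun t ht => mul_nonneg (hη t) (hr t (mem_Icc.1 ht).1)
  have havg := tendsto_inv_mul_of_forall_le hS (Eventually.of_forall hnn) hsum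
  exact ⟨liminf_eq_zero_of_tendsto_weighted_avg hη hS (eventually_atTop.2 ⟨1, hr⟩) havg, havg⟩

end Recursion

section Iterates

theorem exists_norm_le_of_recursion {Ω β E : Type*} [SeminormedAddGroup E] {f : ℕ → Ω → E}
    {step : ℕ → E → β → E} {zs : ℕ → Ω → β} {x : E} (hf1 : ∀ ω, f 1 ω = x)
    (hstep : ∀ t C, ∃ C', ∀ g z, ‖g‖ ≤ C → ‖step t g z‖ ≤ C')
    (hrec : ∀ t ≥ 1, ∀ ω, f (t + 1) ω = step t (f t ω) (zs t ω)) {t : ℕ} (ht : 1 ≤ t) :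
    ∃ C, ∀ ω, ‖f t ω‖ ≤ C := by
  induction t, ht using Nat.le_induction with
  | base => exact ⟨‖x‖, fun ω => by rw [hf1]⟩
  | succ t ht ih =>
    obtain ⟨C, hC⟩ := ih
    obtain ⟨C', hC'⟩ := hstep t C
    exact ⟨C', fun ω => hrec t ht ω ▸ hC' _ _ (hC ω)⟩

variable {Ω α β : Type*} [MeasurableSpace α] [mβ : MeasurableSpace β]
  {zs : ℕ → Ω → β} {f : ℕ → Ω → α} {step : ℕ → α → β → α}

theorem measurable_iSup_comap_of_recursion {x : α} (hf1 : ∀ ω, f 1 ω = x)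
    (hstep : ∀ t, Measurable fun p : α × β => step t p.1 p.2)
    (hrec : ∀ t ≥ 1, ∀ ω, f (t + 1) ω = step t (f t ω) (zs t ω)) {t : ℕ} (ht : 1 ≤ t) :
    Measurable[⨆ i ∈ Set.Iio t, mβ.comap (zs i)] (f t) := by
  induction t, ht using Nat.le_induction with
  | base => simp only [funext hf1, measurable_const]
  | succ t ht ih =>
    have hle : ⨆ i ∈ Set.Iio t, mβ.comap (zs i) ≤ ⨆ i ∈ Set.Iio (t + 1), mβ.comap (zs i) :=
      biSup_mono fun i hi => hi.trans (Nat.lt_succ_self t)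
    have hz : Measurable[⨆ i ∈ Set.Iio (t + 1), mβ.comap (zs i)] (zs t) :=
      Measurable.of_comap_le (le_biSup (fun i => mβ.comap (zs i)) (Nat.lt_succ_self t))
    rw [funext (hrec t ht)]
    exact (hstep t).comp ((ih.mono hle le_rfl).prodMk hz)

variable [MeasurableSpace Ω] {P : Measure Ω}

theorem measurable_of_recursion {x : α} (hzs : ∀ t, Measurable (zs t)) (hf1 : ∀ ω, f 1 ω = x)
    (hstep : ∀ t, Measurable fun p : α × β => step t p.1 p.2)
    (hrec : ∀ t ≥ 1, ∀ ω, f (t + 1) ω = step t (f t ω) (zs t ω)) {t : ℕ} (ht : 1 ≤ t) :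
    Measurable (f t) :=
  (measurable_iSup_comap_of_recursion hf1 hstep hrec ht).mono
    (iSup₂_le fun i _ => (hzs i).comap_le) le_rfl

theorem indepFun_of_recursion {x : α} (hzs : ∀ t, Measurable (zs t)) (hind : iIndepFun zs P)
    (hf1 : ∀ ω, f 1 ω = x) (hstep : ∀ t, Measurable fun p : α × β => step t p.1 p.2)
    (hrec : ∀ t ≥ 1, ∀ ω, f (t + 1) ω = step t (f t ω) (zs t ω)) {t : ℕ} (ht : 1 ≤ t) :
    IndepFun (f t) (zs t) P := by
  have hpast : Indep (⨆ i ∈ Set.Iio t, mβ.comap (zs i)) (mβ.comap (zs t)) P := by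
    simpa using indep_iSup_of_disjoint (fun i => (hzs i).comap_le) hind
      (S := Set.Iio t) (T := {t}) (Set.disjoint_singleton_right.2 (lt_irrefl t))
  exact indep_of_indep_of_le_left hpast
    (measurable_iSup_comap_of_recursion hf1 hstep hrec ht).comap_le

theorem ProbabilityTheory.IndepFun.integral_comp_eq_integral_integral [IsProbabilityMeasure P]
    {F : Ω → α} {Z : Ω → β} (hFZ : IndepFun F Z P) (hF : Measurable F) (hZ : Measurable Z)
    {h : α → β → ℝ} (hh : StronglyMeasurable fun p : α × β => h p.1 p.2)
    (hint : Integrable (fun ω => h (F ω) (Z ω)) P) :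
    ∫ ω, h (F ω) (Z ω) ∂P = ∫ ω, ∫ z, h (F ω) z ∂(P.map Z) ∂P := by
  have hFZm : Measurable fun ω => (F ω, Z ω) := hF.prodMk hZ
  have hmap : P.map (fun ω => (F ω, Z ω)) = (P.map F).prod (P.map Z) :=
    (indepFun_iff_map_prod_eq_prod_map_map hF.aemeasurable hZ.aemeasurable).1 hFZ
  have hint' : Integrable (fun p : α × β => h p.1 p.2) ((P.map F).prod (P.map Z)) := by
    rw [← hmap]
    exact (integrable_map_measure hh.aestronglyMeasurable hFZm.aemeasurable).2 hint
  calc ∫ ω, h (F ω) (Z ω) ∂P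
      = ∫ p : α × β, h p.1 p.2 ∂(P.map fun ω => (F ω, Z ω)) :=
        (integral_map hFZm.aemeasurable hh.aestronglyMeasurable).symm
    _ = ∫ g, ∫ z, h g z ∂(P.map Z) ∂(P.map F) := by rw [hmap, integral_prod _ hint']
    _ = ∫ ω, ∫ z, h (F ω) z ∂(P.map Z) ∂P :=
        integral_map hF.aemeasurable hh.integral_prod_right'.aestronglyMeasurable

end Iterates

section SelfBoundedLoss

variable {Z H : Type*} [NormedAddCommGroup H] [InnerProductSpace ℝ H]

theorem sq_inner_le_of_norm_le {v : H} {κ : ℝ} (hv : ‖v‖ ≤ κ) (g : H) :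
    ⟪g, v⟫ ^ 2 ≤ (κ * ‖g‖) ^ 2 := by
  rw [← sq_abs]
  calc |⟪g, v⟫| ^ 2 ≤ (‖g‖ * ‖v‖) ^ 2 := by gcongr; exact abs_real_inner_le_norm g v
    _ ≤ (κ * ‖g‖) ^ 2 := by rw [mul_comm κ]; gcongr

-- `ψ z` and `ψ' z` stand for `φ(y, ·)` and `φ'(y, ·)` at a sample `z = (x, y)`.
structure IsSelfBoundedLoss (ψ ψ' : Z → ℝ → ℝ) (c M : ℝ) : Prop where
  const_pos : 0 < c
  nonneg : ∀ z s, 0 ≤ ψ z s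
  add_deriv_mul_sub_le : ∀ z s t, ψ z s + ψ' z s * (t - s) ≤ ψ z t
  sq_deriv_le : ∀ z s, ψ' z s ^ 2 ≤ c * (1 + ψ z s)
  apply_zero_le : ∀ z, ψ z 0 ≤ M

namespace IsSelfBoundedLoss

variable {ψ ψ' : Z → ℝ → ℝ} {c M : ℝ}

theorem of_holder {L α : ℝ} (hL : 0 < L) (hα0 : 0 ≤ α) (hα1 : α ≤ 1) (hnn : ∀ z s, 0 ≤ ψ z s)
    (hconv : ∀ z, ConvexOn ℝ Set.univ (ψ z)) (hderiv : ∀ z s, HasDerivAt (ψ z) (ψ' z s) s)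
    (hholder : ∀ z s t, |ψ' z s - ψ' z t| ≤ L * |s - t| ^ α) (hM : ∀ z, ψ z 0 ≤ M) :
    IsSelfBoundedLoss ψ ψ' (4 * (L ^ (1 + α)⁻¹) ^ 2) M where
  const_pos := by positivity
  nonneg := hnn
  add_deriv_mul_sub_le z := (hconv z).add_deriv_mul_sub_le (hderiv z)
  sq_deriv_le z := sq_deriv_le_of_holder hL hα0 hα1 (hnn z)
    ((hconv z).add_deriv_mul_sub_le (hderiv z)) (hholder z)
  apply_zero_le := hM

theorem le_add_mul_sq (h : IsSelfBoundedLoss ψ ψ' c M) (z : Z) (s : ℝ) :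
    ψ z s ≤ 2 * M + 1 + c * s ^ 2 :=
  (le_of_sq_deriv_le h.const_pos (h.add_deriv_mul_sub_le z) (h.sq_deriv_le z) s).trans
    (by linarith [h.apply_zero_le z])

theorem apply_inner_le (h : IsSelfBoundedLoss ψ ψ' c M) {k : Z → H} {κ : ℝ}
    (hκ : ∀ z, ‖k z‖ ≤ κ) (g : H) (z : Z) :
    ψ z ⟪g, k z⟫ ≤ 2 * M + 1 + c * (κ * ‖g‖) ^ 2 :=
  (h.le_add_mul_sq z _).trans <| by
    linarith [mul_le_mul_of_nonneg_left (sq_inner_le_of_norm_le (hκ z) g) h.const_pos.le]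

end IsSelfBoundedLoss

variable (k : Z → H) (ψ' : Z → ℝ → ℝ)

def ogdStep (η : ℝ) (g : H) (z : Z) : H := g - (η * ψ' z ⟪g, k z⟫) • k z

variable {k ψ'} {ψ : Z → ℝ → ℝ} {c M κ η : ℝ}

theorem exists_norm_ogdStep_le (hψ : IsSelfBoundedLoss ψ ψ' c M) (hκ : ∀ z, ‖k z‖ ≤ κ)
    (hη : 0 ≤ η) (C : ℝ) : ∃ C', ∀ g z, ‖g‖ ≤ C → ‖ogdStep k ψ' η g z‖ ≤ C' := by
  refine ⟨C + η * √(c * (1 + (2 * M + 1 + c * (κ * C) ^ 2))) * κ, fun g z hg => ?_⟩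
  have hderiv : |ψ' z ⟪g, k z⟫| ≤ √(c * (1 + (2 * M + 1 + c * (κ * C) ^ 2))) := by
    refine abs_le_sqrt ((hψ.sq_deriv_le z _).trans ?_)
    have hc := hψ.const_pos.le
    gcongr
    refine (hψ.apply_inner_le hκ g z).trans ?_
    rw [mul_pow, mul_pow]
    gcongr
  calc ‖ogdStep k ψ' η g z‖ ≤ ‖g‖ + η * |ψ' z ⟪g, k z⟫| * ‖k z‖ := by
        refine (norm_sub_le _ _).trans_eq ?_
        rw [norm_smul, Real.norm_eq_abs, abs_mul, abs_of_nonneg hη]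
    _ ≤ C + η * √(c * (1 + (2 * M + 1 + c * (κ * C) ^ 2))) * κ := by
        gcongr
        exact hκ z

theorem norm_ogdStep_sub_sq_le (hψ : IsSelfBoundedLoss ψ ψ' c M) (hκ : ∀ z, ‖k z‖ ≤ κ)
    (hη : 0 ≤ η) (g u : H) (z : Z) :
    ‖ogdStep k ψ' η g z - u‖ ^ 2 ≤ ‖g - u‖ ^ 2 - 2 * η * (ψ z ⟪g, k z⟫ - ψ z ⟪u, k z⟫)
      + η ^ 2 * (c * κ ^ 2) * (1 + ψ z ⟪g, k z⟫) := by
  have hexpand : ‖ogdStep k ψ' η g z - u‖ ^ 2 = ‖g - u‖ ^ 2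
      - 2 * η * (ψ' z ⟪g, k z⟫ * (⟪g, k z⟫ - ⟪u, k z⟫))
      + η ^ 2 * (ψ' z ⟪g, k z⟫ ^ 2 * ‖k z‖ ^ 2) := by
    rw [ogdStep, sub_right_comm, norm_sub_sq_real, real_inner_smul_right, inner_sub_left,
      norm_smul, Real.norm_eq_abs, mul_pow, sq_abs]
    ring
  have htan := hψ.add_deriv_mul_sub_le z ⟪g, k z⟫ ⟪u, k z⟫
  have hself := hψ.sq_deriv_le z ⟪g, k z⟫
  have hk : ‖k z‖ ^ 2 ≤ κ ^ 2 := pow_le_pow_left₀ (norm_nonneg _) (hκ z) 2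
  rw [hexpand]
  nlinarith [mul_le_mul hself hk (sq_nonneg _) (by nlinarith [hψ.nonneg z ⟪g, k z⟫, hψ.const_pos]),
    sq_nonneg η]

end SelfBoundedLoss

section Risk

theorem integral_const_add_mul_add_mul {Ω : Type*} [MeasurableSpace Ω] {μ : Measure Ω}
    [IsProbabilityMeasure μ] {p q : Ω → ℝ} (hp : Integrable p μ) (hq : Integrable q μ)
    (a b d : ℝ) :
    ∫ ω, (a + b * p ω + d * q ω) ∂μ = a + b * ∫ ω, p ω ∂μ + d * ∫ ω, q ω ∂μ := by
  have hab : Integrable (fun ω => a + b * p ω) μ := (integrable_const a).add (hp.const_mul b)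
  rw [integral_add hab (hq.const_mul d), integral_add (integrable_const a) (hp.const_mul b),
    integral_const_mul, integral_const_mul]
  simp

variable {Z H : Type*} [NormedAddCommGroup H] [InnerProductSpace ℝ H] [MeasurableSpace Z]

variable (ρ : Measure Z) (k : Z → H) (ψ : Z → ℝ → ℝ)

noncomputable def risk (g : H) : ℝ := ∫ z, ψ z ⟪g, k z⟫ ∂ρ

variable {ρ k ψ} {ψ' : Z → ℝ → ℝ} {c M κ η : ℝ}

theorem risk_nonneg (hψ : IsSelfBoundedLoss ψ ψ' c M) (g : H) : 0 ≤ risk ρ k ψ g :=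
  integral_nonneg fun z => hψ.nonneg z _

variable [MeasurableSpace H] [BorelSpace H] [SecondCountableTopology H]

theorem measurable_ogdStep (hψ' : Measurable fun p : Z × ℝ => ψ' p.1 p.2) (hk : Measurable k) :
    Measurable fun p : H × Z => ogdStep k ψ' η p.1 p.2 := by
  have hkz : Measurable fun p : H × Z => k p.2 := hk.comp measurable_snd
  exact measurable_fst.sub
    ((measurable_const.mul (hψ'.comp (measurable_snd.prodMk (measurable_fst.inner hkz)))).smul hkz)

theorem measurable_risk [SFinite ρ] (hψm : Measurable fun p : Z × ℝ => ψ p.1 p.2)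
    (hk : Measurable k) : Measurable (risk ρ k ψ) :=
  (hψm.comp (measurable_snd.prodMk (measurable_fst.inner (hk.comp measurable_snd))))
    |>.stronglyMeasurable.integral_prod_right'.measurable

theorem integrable_loss_inner [IsFiniteMeasure ρ] (hψ : IsSelfBoundedLoss ψ ψ' c M)
    (hψm : Measurable fun p : Z × ℝ => ψ p.1 p.2) (hk : Measurable k) (hκ : ∀ z, ‖k z‖ ≤ κ)
    (g : H) : Integrable (fun z => ψ z ⟪g, k z⟫) ρ :=
  .of_bound (hψm.comp (measurable_id.prodMk (measurable_const.inner hk))).aestronglyMeasurable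
    _ (ae_of_all _ fun z => by
      rw [Real.norm_of_nonneg (hψ.nonneg z _)]; exact hψ.apply_inner_le hκ g z)

theorem risk_le [IsProbabilityMeasure ρ] (hψ : IsSelfBoundedLoss ψ ψ' c M)
    (hψm : Measurable fun p : Z × ℝ => ψ p.1 p.2) (hk : Measurable k) (hκ : ∀ z, ‖k z‖ ≤ κ)
    (g : H) : risk ρ k ψ g ≤ 2 * M + 1 + c * (κ * ‖g‖) ^ 2 := by
  simpa [risk] using integral_mono (integrable_loss_inner (ρ := ρ) hψ hψm hk hκ g)
    (integrable_const _) (hψ.apply_inner_le hκ g)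

theorem integrable_risk_comp {Ω : Type*} [MeasurableSpace Ω] {P : Measure Ω} [IsFiniteMeasure P]
    [IsProbabilityMeasure ρ] (hψ : IsSelfBoundedLoss ψ ψ' c M)
    (hψm : Measurable fun p : Z × ℝ => ψ p.1 p.2) (hk : Measurable k) (hκ : ∀ z, ‖k z‖ ≤ κ)
    {F : Ω → H} (hF : Measurable F) {C : ℝ} (hC : ∀ ω, ‖F ω‖ ≤ C) :
    Integrable (fun ω => risk ρ k ψ (F ω)) P := by
  refine .of_bound ((measurable_risk hψm hk).comp hF).aestronglyMeasurable
    (2 * M + 1 + c * (κ * C) ^ 2) (ae_of_all _ fun ω => ?_)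
  rw [Real.norm_of_nonneg (risk_nonneg (ρ := ρ) (k := k) hψ (F ω))]
  refine (risk_le hψ hψm hk hκ _).trans ?_
  have hc := hψ.const_pos.le
  rw [mul_pow, mul_pow]
  gcongr
  exact hC ω

theorem integral_norm_ogdStep_sub_sq_le [IsProbabilityMeasure ρ] (hψ : IsSelfBoundedLoss ψ ψ' c M)
    (hψm : Measurable fun p : Z × ℝ => ψ p.1 p.2) (hk : Measurable k) (hκ : ∀ z, ‖k z‖ ≤ κ)
    (hη : 0 ≤ η) (g u : H) :
    ∫ z, ‖ogdStep k ψ' η g z - u‖ ^ 2 ∂ρ ≤ ‖g - u‖ ^ 2 - 2 * η * (risk ρ k ψ g - risk ρ k ψ u)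
      + η ^ 2 * (c * κ ^ 2) * (1 + risk ρ k ψ g) := by
  have hint := integrable_loss_inner (ρ := ρ) hψ hψm hk hκ
  calc ∫ z, ‖ogdStep k ψ' η g z - u‖ ^ 2 ∂ρ
      ≤ ∫ z, (‖g - u‖ ^ 2 + η ^ 2 * (c * κ ^ 2) + (η ^ 2 * (c * κ ^ 2) - 2 * η) * ψ z ⟪g, k z⟫
          + 2 * η * ψ z ⟪u, k z⟫) ∂ρ := by
        refine integral_mono_of_nonneg (ae_of_all _ fun z => sq_nonneg _)
          ((((integrable_const _).add ((hint g).const_mul _))).add ((hint u).const_mul _))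
          (ae_of_all _ fun z => ?_)
        linarith [norm_ogdStep_sub_sq_le hψ hκ hη g u z]
    _ = _ := by rw [integral_const_add_mul_add_mul (hint g) (hint u), risk, risk]; ring

theorem integral_norm_ogdStep_sub_sq_le_of_indepFun {Ω : Type*} [MeasurableSpace Ω]
    {P : Measure Ω} [IsProbabilityMeasure P] [IsProbabilityMeasure ρ]
    (hψ : IsSelfBoundedLoss ψ ψ' c M) (hψm : Measurable fun p : Z × ℝ => ψ p.1 p.2)
    (hψ'm : Measurable fun p : Z × ℝ => ψ' p.1 p.2) (hk : Measurable k) (hκ : ∀ z, ‖k z‖ ≤ κ)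
    {F : Ω → H} {Zs : Ω → Z} (hind : IndepFun F Zs P) (hF : Measurable F) (hZs : Measurable Zs)
    (hmap : P.map Zs = ρ) {C : ℝ} (hC : ∀ ω, ‖F ω‖ ≤ C) (hη : 0 ≤ η) (u : H) :
    ∫ ω, ‖ogdStep k ψ' η (F ω) (Zs ω) - u‖ ^ 2 ∂P
      ≤ ∫ ω, ‖F ω - u‖ ^ 2 ∂P - 2 * η * (∫ ω, risk ρ k ψ (F ω) ∂P - risk ρ k ψ u)
        + η ^ 2 * (c * κ ^ 2) * (1 + ∫ ω, risk ρ k ψ (F ω) ∂P) := by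
  have hstep := measurable_ogdStep (η := η) hψ'm hk
  have hsq : Measurable fun p : H × Z => ‖ogdStep k ψ' η p.1 p.2 - u‖ ^ 2 :=
    (hstep.sub_const u).norm.pow_const 2
  have hdist : Integrable (fun ω => ‖F ω - u‖ ^ 2) P :=
    .of_bound ((hF.sub_const u).norm.pow_const 2).aestronglyMeasurable ((C + ‖u‖) ^ 2)
      (ae_of_all _ fun ω => by
        rw [Real.norm_of_nonneg (sq_nonneg _)]
        gcongr
        exact (norm_sub_le _ _).trans (by linarith [hC ω]))
  obtain ⟨C', hC'⟩ := exists_norm_ogdStep_le hψ hκ hη C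
  have hnext : Integrable (fun ω => ‖ogdStep k ψ' η (F ω) (Zs ω) - u‖ ^ 2) P :=
    .of_bound (hsq.comp (hF.prodMk hZs)).aestronglyMeasurable ((C' + ‖u‖) ^ 2)
      (ae_of_all _ fun ω => by
        rw [Real.norm_of_nonneg (sq_nonneg _)]
        gcongr
        exact (norm_sub_le _ _).trans (by linarith [hC' (F ω) (Zs ω) (hC ω)]))
  have hrisk := integrable_risk_comp (ρ := ρ) (P := P) hψ hψm hk hκ hF hC
  calc ∫ ω, ‖ogdStep k ψ' η (F ω) (Zs ω) - u‖ ^ 2 ∂P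
      = ∫ ω, ∫ z, ‖ogdStep k ψ' η (F ω) z - u‖ ^ 2 ∂ρ ∂P := by
        rw [← hmap]
        exact hind.integral_comp_eq_integral_integral (h := fun g z => ‖ogdStep k ψ' η g z - u‖ ^ 2)
          hF hZs hsq.stronglyMeasurable hnext
    _ ≤ ∫ ω, (2 * η * risk ρ k ψ u + η ^ 2 * (c * κ ^ 2) + 1 * ‖F ω - u‖ ^ 2
          + (η ^ 2 * (c * κ ^ 2) - 2 * η) * risk ρ k ψ (F ω)) ∂P := by
        refine integral_mono_of_nonneg
          (ae_of_all _ fun ω => integral_nonneg fun z => sq_nonneg _)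
          ((((integrable_const _).add (hdist.const_mul _))).add (hrisk.const_mul _))
          (ae_of_all _ fun ω => ?_)
        linarith [integral_norm_ogdStep_sub_sq_le (ρ := ρ) (ψ' := ψ') hψ hψm hk hκ hη (F ω) u]
    _ = _ := by rw [integral_const_add_mul_add_mul hdist hrisk]; ring

theorem liminf_and_weighted_average_of_ogdStep {Ω : Type*} [MeasurableSpace Ω] {P : Measure Ω}
    [IsProbabilityMeasure P] [IsProbabilityMeasure ρ] (hψ : IsSelfBoundedLoss ψ ψ' c M)
    (hψm : Measurable fun p : Z × ℝ => ψ p.1 p.2) (hψ'm : Measurable fun p : Z × ℝ => ψ' p.1 p.2)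
    (hk : Measurable k) (hκ : ∀ z, ‖k z‖ ≤ κ) {zs : ℕ → Ω → Z} (hzs : ∀ t, Measurable (zs t))
    (hzdist : ∀ t, P.map (zs t) = ρ) (hind : iIndepFun zs P) {η : ℕ → ℝ} (hη : ∀ t, 0 ≤ η t)
    (hη0 : Tendsto η atTop (𝓝 0)) (hS : Tendsto (fun T => ∑ t ∈ Finset.Icc 1 T, η t) atTop atTop)
    {f : ℕ → Ω → H} {x : H} (hf1 : ∀ ω, f 1 ω = x)
    (hrec : ∀ t ≥ 1, ∀ ω, f (t + 1) ω = ogdStep k ψ' (η t) (f t ω) (zs t ω))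
    {u : H} (hu : ∀ g, risk ρ k ψ u ≤ risk ρ k ψ g) :
    liminf (fun t => ∫ ω, risk ρ k ψ (f t ω) ∂P - risk ρ k ψ u) atTop = 0 ∧
      Tendsto (fun T => (∑ t ∈ Finset.Icc 1 T, η t)⁻¹ *
        ∑ t ∈ Finset.Icc 1 T, η t * (∫ ω, risk ρ k ψ (f t ω) ∂P - risk ρ k ψ u))
        atTop (𝓝 0) := by
  have hstep (t : ℕ) := measurable_ogdStep (ψ' := ψ') (η := η t) hψ'm hk
  have hfm {t : ℕ} (ht : 1 ≤ t) := measurable_of_recursion hzs hf1 hstep hrec ht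
  have hbdd {t : ℕ} (ht : 1 ≤ t) :=
    exists_norm_le_of_recursion hf1 (fun t => exists_norm_ogdStep_le hψ hκ (hη t)) hrec ht
  refine liminf_eq_zero_and_tendsto_of_recursion (a := fun t => ∫ ω, ‖f t ω - u‖ ^ 2 ∂P)
    (A := c * κ ^ 2 * (1 + risk ρ k ψ u)) (B := c * κ ^ 2) hη hη0 hS
    (fun t => integral_nonneg fun ω => sq_nonneg _) (fun t ht => ?_) (fun t ht => ?_)
  · obtain ⟨C, hC⟩ := hbdd ht
    simpa using integral_mono (integrable_const _)
      (integrable_risk_comp (ρ := ρ) (P := P) hψ hψm hk hκ (hfm ht) hC) (fun ω => hu (f t ω))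
  · obtain ⟨C, hC⟩ := hbdd ht
    rw [funext (hrec t ht)]
    refine (integral_norm_ogdStep_sub_sq_le_of_indepFun hψ hψm hψ'm hk hκ
      (indepFun_of_recursion hzs hind hf1 hstep hrec ht) (hfm ht) (hzs t) (hzdist t) hC (hη t)
      u).trans_eq ?_
    ring

end Risk

theorem liminf_and_weighted_average_of_expected_errors_general
    {X : Type*} [MeasurableSpace X] {Y : Set ℝ}
    {H : Type*} [NormedAddCommGroup H] [InnerProductSpace ℝ H]
    [MeasurableSpace H] [BorelSpace H] [SecondCountableTopology H]
    (K : X → H) (hKmeas : Measurable K)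
    (κ : ℝ) (hκ : ∀ x : X, ‖K x‖ ≤ κ)
    (L α : ℝ) (hL : 0 < L) (hα : α ∈ Set.Ioc (0 : ℝ) 1)
    (φ φ' : ℝ → ℝ → ℝ)
    (hφmeas : Measurable fun p : ℝ × ℝ => φ p.1 p.2)
    (hφ'meas : Measurable fun p : ℝ × ℝ => φ' p.1 p.2)
    (hφnonneg : ∀ y ∈ Y, ∀ s : ℝ, 0 ≤ φ y s)
    (hφconv : ∀ y ∈ Y, ConvexOn ℝ Set.univ (φ y))
    (hφderiv : ∀ y ∈ Y, ∀ s : ℝ, HasDerivAt (φ y) (φ' y s) s)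
    (hφholder : ∀ y ∈ Y, ∀ s t : ℝ, |φ' y s - φ' y t| ≤ L * |s - t| ^ α)
    (ρ : Measure (X × Y)) [IsProbabilityMeasure ρ]
    (E : H → ℝ) (hE : E = fun g : H => ∫ z : X × Y, φ (z.2 : ℝ) ⟪g, K z.1⟫ ∂ρ)
    (fH : H) (hmin : ∀ g : H, E fH ≤ E g)
    (M0 : ℝ) (hM0 : ∀ z : X × Y, φ (z.2 : ℝ) 0 ≤ M0)
    {Ω : Type*} [MeasurableSpace Ω] (P : Measure Ω) [IsProbabilityMeasure P]
    (zs : ℕ → Ω → X × Y) (hzmeas : ∀ t, Measurable (zs t))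
    (hzdist : ∀ t, Measure.map (zs t) P = ρ)
    (hziid : iIndepFun zs P)
    (η : ℕ → ℝ) (hηpos : ∀ t, 0 < η t)
    (f : ℕ → Ω → H) (hf1 : ∀ ω : Ω, f 1 ω = 0)
    (hfrec : ∀ t, 1 ≤ t → ∀ ω : Ω,
      f (t + 1) ω = f t ω - (η t * φ' (((zs t ω).2 : Y) : ℝ) ⟪f t ω, K (zs t ω).1⟫) • K (zs t ω).1)
    (hη0 : Tendsto η atTop (nhds 0))
    (hdiv : Tendsto (fun T => ∑ t ∈ Finset.Icc 1 T, η t) atTop atTop) :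
    Filter.liminf (fun t => (∫ ω, E (f t ω) ∂P) - E fH) atTop = 0 ∧
      Tendsto (fun T => (∑ t ∈ Finset.Icc 1 T, η t)⁻¹ *
          ∑ t ∈ Finset.Icc 1 T, η t * ((∫ ω, E (f t ω) ∂P) - E fH))
        atTop (nhds 0) := by
  obtain rfl : E = risk ρ (fun z => K z.1) (fun z => φ z.2) := hE
  have hsample : Measurable fun p : (X × Y) × ℝ => ((p.1.2 : ℝ), p.2) :=
    (measurable_subtype_coe.comp (measurable_snd.comp measurable_fst)).prodMk measurable_snd
  have hloss : IsSelfBoundedLoss (fun z : X × Y => φ z.2) (fun z => φ' z.2)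
      (4 * (L ^ (1 + α)⁻¹) ^ 2) M0 :=
    .of_holder hL hα.1.le hα.2 (fun z => hφnonneg _ z.2.2) (fun z => hφconv _ z.2.2)
      (fun z => hφderiv _ z.2.2) (fun z => hφholder _ z.2.2) hM0
  exact liminf_and_weighted_average_of_ogdStep hloss (hφmeas.comp hsample)
    (hφ'meas.comp hsample) (hKmeas.comp measurable_fst) (fun z => hκ z.1) hzmeas hzdist hziid
    (fun t => (hηpos t).le) hη0 hdiv hf1 hfrec hmin

/-- Proposition 2 (weak convergence in expectation): if `η_t → 0` and `∑ η_t = ∞`, then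
(i) the liminf of the expected excess generalization errors is zero, and (ii) the weighted
averages of the expected excess generalization errors converge to zero. -/
theorem liminf_and_weighted_average_of_expected_errors
    {X : Type*} [MeasurableSpace X] {Y : Set ℝ}
    {H : Type*} [NormedAddCommGroup H] [InnerProductSpace ℝ H] [CompleteSpace H]
    [MeasurableSpace H] [BorelSpace H] [SecondCountableTopology H]
    (K : X → H) (hKmeas : Measurable K)
    (κ : ℝ) (hκ : ∀ x : X, ‖K x‖ ≤ κ)
    (L α : ℝ) (hL : 0 < L) (hα : α ∈ Set.Ioc (0 : ℝ) 1)
    (φ φ' : ℝ → ℝ → ℝ)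
    (hφmeas : Measurable fun p : ℝ × ℝ => φ p.1 p.2)
    (hφ'meas : Measurable fun p : ℝ × ℝ => φ' p.1 p.2)
    (hφnonneg : ∀ y ∈ Y, ∀ s : ℝ, 0 ≤ φ y s)
    (hφconv : ∀ y ∈ Y, ConvexOn ℝ Set.univ (φ y))
    (hφderiv : ∀ y ∈ Y, ∀ s : ℝ, HasDerivAt (φ y) (φ' y s) s)
    (hφholder : ∀ y ∈ Y, ∀ s t : ℝ, |φ' y s - φ' y t| ≤ L * |s - t| ^ α)
    (ρ : Measure (X × Y)) [IsProbabilityMeasure ρ]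
    (E : H → ℝ) (hE : E = fun g : H => ∫ z : X × Y, φ (z.2 : ℝ) ⟪g, K z.1⟫ ∂ρ)
    (hEint : ∀ g : H, Integrable (fun z : X × Y => φ (z.2 : ℝ) ⟪g, K z.1⟫) ρ)
    (hgint : ∀ g : H, Integrable (fun z : X × Y => φ' (z.2 : ℝ) ⟪g, K z.1⟫ • K z.1) ρ)
    (fH : H) (hmin : ∀ g : H, E fH ≤ E g)
    (hgradH : (∫ z : X × Y, φ' (z.2 : ℝ) ⟪fH, K z.1⟫ • K z.1 ∂ρ) = 0)
    (M0 MH : ℝ) (hM0 : ∀ z : X × Y, φ (z.2 : ℝ) 0 ≤ M0)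
    (hMH : ∀ z : X × Y, φ (z.2 : ℝ) ⟪fH, K z.1⟫ ≤ MH)
    {Ω : Type*} [MeasurableSpace Ω] (P : Measure Ω) [IsProbabilityMeasure P]
    (zs : ℕ → Ω → X × Y) (hzmeas : ∀ t, Measurable (zs t))
    (hzdist : ∀ t, Measure.map (zs t) P = ρ)
    (hziid : iIndepFun zs P)
    (η : ℕ → ℝ) (hηpos : ∀ t, 0 < η t)
    (f : ℕ → Ω → H) (hf1 : ∀ ω : Ω, f 1 ω = 0)
    (hfrec : ∀ t, 1 ≤ t → ∀ ω : Ω,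
      f (t + 1) ω = f t ω - (η t * φ' (((zs t ω).2 : Y) : ℝ) ⟪f t ω, K (zs t ω).1⟫) • K (zs t ω).1)
    (hη0 : Tendsto η atTop (nhds 0))
    (hdiv : Tendsto (fun T => ∑ t ∈ Finset.Icc 1 T, η t) atTop atTop) :
    Filter.liminf (fun t => (∫ ω, E (f t ω) ∂P) - E fH) atTop = 0 ∧
      Tendsto (fun T => (∑ t ∈ Finset.Icc 1 T, η t)⁻¹ *
          ∑ t ∈ Finset.Icc 1 T, η t * ((∫ ω, E (f t ω) ∂P) - E fH))
        atTop (nhds 0) :=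
  liminf_and_weighted_average_of_expected_errors_general K hKmeas κ hκ L α hL hα φ φ' hφmeas hφ'meas
    hφnonneg hφconv hφderiv hφholder ρ E hE fH hmin M0 hM0 P zs hzmeas hzdist hziid η hηpos f hf1
    hfrec hη0 hdiv
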